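/- Let V be a unital commutative associative ℂ-algebra with a trace str, and let A be a differential operator of order at most l ≥ 3 on V which is strongly compatible with the trace. Then for all f_1,…,f_{l−1}, f_l ∈ V one has str(⟨f_1,…,f_{l−1}⟩_{l−1}^A · f_l · (−)) = 0. -/

import Mathlib

/-- The Koszul bracket hierarchy of an operator `D` on a commutative algebra:
`⟨f⟩₁ = D f` and
`⟨f₁,…,f_{l+1}⟩_{l+1} = ⟨f₁,…,f_{l-1},f_l·f_{l+1}⟩_l − ⟨f₁,…,f_l⟩_l·f_{l+1} − f_l·⟨f₁,…,f_{l-1},f_{l+1}⟩_l`. -/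
def koszul {V : Type*} [CommRing V] (D : V → V) : (l : ℕ) → (Fin l → V) → V
  | 0, _ => 0
  | 1, f => D (f 0)
  | l + 2, f =>
      koszul D (l + 1)
        (Fin.snoc (fun i : Fin l => f i.castSucc.castSucc)
          (f ⟨l, by omega⟩ * f ⟨l + 1, by omega⟩))
      - koszul D (l + 1) (fun i => f i.castSucc) * f ⟨l + 1, by omega⟩
      - f ⟨l, by omega⟩ *
          koszul D (l + 1)
            (Fin.snoc (fun i : Fin l => f i.castSucc.castSucc) (f ⟨l + 1, by omega⟩))

/-- `D` is a differential operator of order at most `l` if the `(l+1)`-st Koszul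
bracket vanishes identically. -/
def IsDiffOpOfOrderAtMost {V : Type*} [CommRing V] (D : V → V) (l : ℕ) : Prop :=
  ∀ f : Fin (l + 1) → V, koszul D (l + 1) f = 0

/-- A differential operator `A` of order at most `l` (intended `l ≥ 3`) on a
commutative algebra with a trace `str` is strongly compatible with the trace if
`str(⟨f₁,…,f_{l−1}⟩_{l−1}^A · (−)) = 0` for all `f₁,…,f_{l−1}`. -/
def StronglyCompatibleWithTrace {V : Type*} [CommRing V] [Algebra ℂ V]
    (str : Module.End ℂ V →ₗ[ℂ] ℂ) (A : V → V) (l : ℕ) : Prop :=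
  ∀ f : Fin (l - 1) → V, str (LinearMap.mulLeft ℂ (koszul A (l - 1) f)) = 0

lemma koszul_snoc_snoc {V : Type*} [CommRing V] (D : V → V) (k : ℕ)
    (c : Fin k → V) (a b : V) :
    koszul D (k + 2) (Fin.snoc (Fin.snoc c a) b)
      = koszul D (k + 1) (Fin.snoc c (a * b))
        - koszul D (k + 1) (Fin.snoc c a) * b
        - a * koszul D (k + 1) (Fin.snoc c b) := by
  have h1 : (⟨k, by omega⟩ : Fin (k+2)) = (Fin.last k).castSucc := rfl
  have h2 : (⟨k+1, by omega⟩ : Fin (k+2)) = Fin.last (k+1) := rfl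
  rw [koszul]
  simp [h1, h2, Fin.snoc_castSucc, Fin.snoc_last]

noncomputable def koszulEnd {V : Type*} [CommRing V] [Algebra ℂ V] (A : V →ₗ[ℂ] V) :
    (k : ℕ) → (Fin k → V) → (V →ₗ[ℂ] V)
  | 0, _ => A
  | k + 1, c =>
      koszulEnd A k (Fin.init c) ∘ₗ LinearMap.mulLeft ℂ (c (Fin.last k))
      - LinearMap.mulLeft ℂ (koszul (⇑A) (k + 1) c)
      - LinearMap.mulLeft ℂ (c (Fin.last k)) ∘ₗ koszulEnd A k (Fin.init c)

lemma koszulEnd_apply {V : Type*} [CommRing V] [Algebra ℂ V] (A : V →ₗ[ℂ] V) :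
    ∀ (k : ℕ) (c : Fin k → V) (b : V),
      koszulEnd A k c b = koszul (⇑A) (k + 1) (Fin.snoc c b)
  | 0, c, b => by
      simp [koszulEnd, koszul, Fin.snoc]
  | k + 1, c, b => by
      have h := koszul_snoc_snoc (⇑A) k (Fin.init c) (c (Fin.last k)) b
      rw [Fin.snoc_init_self] at h
      simp [koszulEnd, koszulEnd_apply A k, h]

lemma mulLeft_sub' {V : Type*} [CommRing V] [Algebra ℂ V] (x y : V) :
    LinearMap.mulLeft ℂ (x - y) = LinearMap.mulLeft ℂ x - LinearMap.mulLeft ℂ y := by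
  ext v; simp [sub_mul]

/-- Step A: `str(⟨g₁,…,g_{l}⟩_l · h · (−)) = 0` from the trace property and order ≤ l. -/
lemma stepA {V : Type*} [CommRing V] [Algebra ℂ V]
    (str : Module.End ℂ V →ₗ[ℂ] ℂ)
    (hstr : ∀ P Q : Module.End ℂ V, str (P ∘ₗ Q) = str (Q ∘ₗ P))
    (k : ℕ) (A : V →ₗ[ℂ] V)
    (hA : ∀ f : Fin (k + 2) → V, koszul (⇑A) (k + 2) f = 0)
    (c : Fin k → V) (a h : V) :
    str (LinearMap.mulLeft ℂ (koszul (⇑A) (k + 1) (Fin.snoc c a) * h)) = 0 := by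
  have hop : LinearMap.mulLeft ℂ (koszul (⇑A) (k + 1) (Fin.snoc c a))
      = koszulEnd A k c ∘ₗ LinearMap.mulLeft ℂ a
        - LinearMap.mulLeft ℂ a ∘ₗ koszulEnd A k c := by
    ext b
    have h0 := hA (Fin.snoc (Fin.snoc c a) b)
    rw [koszul_snoc_snoc] at h0
    simp only [LinearMap.sub_apply, LinearMap.comp_apply, LinearMap.mulLeft_apply,
      koszulEnd_apply]
    linear_combination -h0
  rw [LinearMap.mulLeft_mul, hop, LinearMap.sub_comp, map_sub]
  have e1 : str ((koszulEnd A k c ∘ₗ LinearMap.mulLeft ℂ a) ∘ₗ LinearMap.mulLeft ℂ h)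
      = str (koszulEnd A k c ∘ₗ LinearMap.mulLeft ℂ (a * h)) := by
    rw [LinearMap.comp_assoc, ← LinearMap.mulLeft_mul]
  have e2 : str ((LinearMap.mulLeft ℂ a ∘ₗ koszulEnd A k c) ∘ₗ LinearMap.mulLeft ℂ h)
      = str (koszulEnd A k c ∘ₗ LinearMap.mulLeft ℂ (h * a)) := by
    rw [LinearMap.comp_assoc, hstr, LinearMap.comp_assoc, ← LinearMap.mulLeft_mul]
  rw [e1, e2, mul_comm a h, sub_self]

lemma stepD {V : Type*} [CommRing V] (D : V → V) (k : ℕ)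
    (c : Fin k → V) (x y : V) :
    koszul D (k + 2) (Fin.snoc (Fin.snoc c x) y)
      = koszul D (k + 2) (Fin.snoc (Fin.snoc c y) x) := by
  rw [koszul_snoc_snoc, koszul_snoc_snoc, mul_comm x y]
  ring

lemma stepC {V : Type*} [CommRing V] [Algebra ℂ V]
    (str : Module.End ℂ V →ₗ[ℂ] ℂ)
    (hstr : ∀ P Q : Module.End ℂ V, str (P ∘ₗ Q) = str (Q ∘ₗ P))
    (m : ℕ) (A : V →ₗ[ℂ] V)
    (hA : ∀ f : Fin (m + 4) → V, koszul (⇑A) (m + 4) f = 0)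
    (hc : ∀ f : Fin (m + 2) → V, str (LinearMap.mulLeft ℂ (koszul (⇑A) (m + 2) f)) = 0)
    (c : Fin (m + 1) → V) (x y : V) :
    str (LinearMap.mulLeft ℂ (koszul (⇑A) (m + 2) (Fin.snoc c x) * y))
      = - str (LinearMap.mulLeft ℂ (koszul (⇑A) (m + 2) (Fin.snoc c y) * x)) := by
  have h0 := stepA str hstr (m + 2) A hA (Fin.snoc c x) y 1
  rw [mul_one, koszul_snoc_snoc, mulLeft_sub', mulLeft_sub', map_sub, map_sub,
    hc (Fin.snoc c (x * y)), mul_comm x (koszul (⇑A) (m + 2) (Fin.snoc c y))] at h0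
  rw [show koszul (⇑A) (m + 1 + 1) (Fin.snoc c x) = koszul (⇑A) (m + 2) (Fin.snoc c x) from rfl] at h0
  linear_combination -h0

/-- If `A` is a differential operator of order at most `l ≥ 3` strongly
compatible with the trace, then `str(⟨f₁,…,f_{l−1}⟩_{l−1}^A · f_l · (−)) = 0`. -/
theorem trace_koszul_strong_mul_extra {V : Type*} [CommRing V] [Algebra ℂ V]
    (str : Module.End ℂ V →ₗ[ℂ] ℂ)
    (hstr : ∀ P Q : Module.End ℂ V, str (P ∘ₗ Q) = str (Q ∘ₗ P))
    (l : ℕ) (hl : 3 ≤ l)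
    (A : V →ₗ[ℂ] V) (hA : IsDiffOpOfOrderAtMost (⇑A) l)
    (hAc : StronglyCompatibleWithTrace str (⇑A) l)
    (f : Fin l → V) :
    str (LinearMap.mulLeft ℂ
      (koszul (⇑A) (l - 1) (fun i : Fin (l - 1) => f (Fin.castLE (Nat.sub_le l 1) i))
        * f ⟨l - 1, by omega⟩)) = 0 := by
  obtain ⟨m, rfl⟩ : ∃ m, l = m + 3 := ⟨l - 3, by omega⟩
  have hA' : ∀ g : Fin (m + 4) → V, koszul (⇑A) (m + 4) g = 0 := hA
  have hc : ∀ g : Fin (m + 2) → V,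
      str (LinearMap.mulLeft ℂ (koszul (⇑A) (m + 2) g)) = 0 := hAc
  set c : Fin m → V := fun i => f ⟨i.val, by omega⟩ with hcdef
  set x : V := f ⟨m, by omega⟩ with hxdef
  set y : V := f ⟨m + 1, by omega⟩ with hydef
  set h : V := f ⟨m + 2, by omega⟩ with hhdef
  have hfun : (fun i : Fin (m + 2) => f (Fin.castLE (Nat.sub_le (m + 3) 1) i))
      = Fin.snoc (Fin.snoc c x) y := by
    funext i
    refine Fin.lastCases ?_ (fun j => ?_) i
    · rw [Fin.snoc_last]
      exact congrArg f (by ext; simp)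
    · rw [Fin.snoc_castSucc]
      refine Fin.lastCases ?_ (fun j' => ?_) j
      · rw [Fin.snoc_last]
        exact congrArg f (by ext; simp)
      · rw [Fin.snoc_castSucc]
        exact congrArg f (by ext; simp)
  show str (LinearMap.mulLeft ℂ
      (koszul (⇑A) (m + 2) (fun i : Fin (m + 2) => f (Fin.castLE (Nat.sub_le (m + 3) 1) i))
        * f ⟨m + 2, by omega⟩)) = 0
  rw [hfun]
  have C := stepC str hstr m A hA' hc
  have e1 := C (Fin.snoc c x) y h
  rw [stepD (⇑A) m c x h] at e1
  have e2 := C (Fin.snoc c h) x y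
  rw [stepD (⇑A) m c h y] at e2
  have e3 := C (Fin.snoc c y) h x
  rw [stepD (⇑A) m c y x] at e3
  linear_combination (e1 - e2 + e3) / 2
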